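/- For the counting quantities of Theorem 1, the correlation ratios are monotone: p_{n,z} ≤ τ_{n,z}(1) ≤ τ_{n,z}(2) ≤ … ≤ τ_{n,z}(k) = 1, where τ_{n,z}(r) = p_{n,z}^{−1} P(h(ξ₁,…,ξ_k) > z and h(ξ_{1+k−r},…,ξ_{2k−r}) > z) and p_{n,z} = P(h(ξ₁,…,ξ_k) > z) > 0. -/

import Mathlib

/-!
Let `μ` be the common law of the `ξ i` and `E = {h > z} ⊆ Sᵏ`. Since `h` is symmetric, rotating
the second window shows that `P(h(ξ₁, …) > z, h(ξ_{1+k-r}, …) > z)` is the probability that two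
`μ^k`-samples which share their last `r` coordinates, and are independent otherwise, both lie in
`E`. Conditioning on the shared coordinates `s`, this probability is `∫ F_s²`, where `F_s(v)` is
the conditional probability of `E` given the coordinates of `v` in `s`. For `s ⊆ t`, `F_s` is the
average of `F_t` over the coordinates in `t \ s`, so by Jensen's inequality `∫ F_s²` increases
with `s`. For `s = ∅` and `s` = all coordinates it equals `p²` and `p`.
-/

open MeasureTheory ProbabilityTheory

variable {Ω : Type*} [MeasureSpace Ω] {S : Type*} [MeasurableSpace S]

/-- `p_{n,z} = P(h(ξ₁, …, ξ_k) > z)`. -/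
noncomputable def pnz (k : ℕ) (ξ : ℕ → Ω → S) (h : (Fin k → S) → ℝ) (z : ℝ) : ℝ :=
  (ℙ {ω | z < h (fun j => ξ j ω)}).toReal

/-- `τ_{n,z}(r) = p_{n,z}⁻¹ · P(h(ξ₁, …, ξ_k) > z, h(ξ_{1+k-r}, …, ξ_{2k-r}) > z)`,
where the two index tuples share exactly `r` coordinates (0-based indexing). -/
noncomputable def taunz (k : ℕ) (ξ : ℕ → Ω → S) (h : (Fin k → S) → ℝ) (z : ℝ) (r : ℕ) : ℝ :=
  (pnz k ξ h z)⁻¹ *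
    (ℙ {ω | z < h (fun j => ξ j ω) ∧ z < h (fun j => ξ (k - r + j) ω)}).toReal

open scoped ENNReal

theorem sq_lintegral_le_lintegral_sq {α : Type*} [MeasurableSpace α] (μ : Measure α)
    [IsProbabilityMeasure μ] {f : α → ℝ≥0∞} (hf : AEMeasurable f μ) :
    (∫⁻ a, f a ∂μ) ^ 2 ≤ ∫⁻ a, f a ^ 2 ∂μ := by
  have h := ENNReal.lintegral_mul_le_Lp_mul_Lq μ Real.HolderConjugate.two_two hf
    aemeasurable_const (g := 1)
  simp only [Pi.mul_apply, Pi.one_apply, mul_one, lintegral_const, measure_univ,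
    ENNReal.rpow_ofNat, one_pow, ENNReal.one_rpow] at h
  calc (∫⁻ a, f a ∂μ) ^ 2 ≤ ((∫⁻ a, f a ^ 2 ∂μ) ^ (1 / 2 : ℝ)) ^ 2 := by gcongr
    _ = ∫⁻ a, f a ^ 2 ∂μ := by
      rw [← ENNReal.rpow_natCast, ← ENNReal.rpow_mul]; norm_num

section Piecewise

variable {ι : Type*} [DecidableEq ι] {α : ι → Type*} [∀ i, MeasurableSpace (α i)]

theorem measurable_finset_piecewise (s : Finset ι) :
    Measurable (fun p : (∀ i, α i) × (∀ i, α i) => s.piecewise p.1 p.2) :=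
  measurable_pi_lambda _ fun i => by
    simp only [Finset.piecewise]; split_ifs <;> fun_prop

theorem measurableSet_piecewise_mem {E : Set (∀ i, α i)} (hE : MeasurableSet E) (s : Finset ι)
    (v : ∀ i, α i) : MeasurableSet {x | s.piecewise v x ∈ E} :=
  ((measurable_finset_piecewise s).comp measurable_prodMk_left) hE

variable [Fintype ι]

theorem measurePreserving_finset_piecewise (μ : ∀ i, Measure (α i))
    [∀ i, IsProbabilityMeasure (μ i)] (s : Finset ι) :
    MeasurePreserving (fun p : (∀ i, α i) × (∀ i, α i) => s.piecewise p.1 p.2)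
      ((Measure.pi μ).prod (Measure.pi μ)) (Measure.pi μ) := by
  refine ⟨measurable_finset_piecewise s, (Measure.pi_eq fun t ht => ?_).symm⟩
  have hpre : (fun p : (∀ i, α i) × (∀ i, α i) => s.piecewise p.1 p.2) ⁻¹' Set.univ.pi t
      = Set.univ.pi (s.piecewise t fun _ => Set.univ) ×ˢ
          Set.univ.pi (s.piecewise (fun _ => Set.univ) t) := by
    ext p
    simp only [Set.mem_preimage, Set.mem_pi, Set.mem_univ, true_implies, Set.mem_prod,
      Finset.piecewise, ← forall_and]
    refine forall_congr' fun i => ?_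
    by_cases hi : i ∈ s <;> simp [hi]
  rw [Measure.map_apply (measurable_finset_piecewise s) (.univ_pi ht), hpre, Measure.prod_prod,
    Measure.pi_pi, Measure.pi_pi, ← Finset.prod_mul_distrib]
  refine Finset.prod_congr rfl fun i _ => ?_
  by_cases hi : i ∈ s <;> simp [hi]

theorem lintegral_eq_lintegral_lintegral_piecewise (μ : ∀ i, Measure (α i))
    [∀ i, IsProbabilityMeasure (μ i)] (s : Finset ι) {f : (∀ i, α i) → ℝ≥0∞} (hf : Measurable f) :
    ∫⁻ w, f w ∂Measure.pi μ = ∫⁻ v, ∫⁻ x, f (s.piecewise v x) ∂Measure.pi μ ∂Measure.pi μ := by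
  rw [← (measurePreserving_finset_piecewise μ s).lintegral_comp hf]
  exact lintegral_prod _ (hf.comp (measurable_finset_piecewise s)).aemeasurable

end Piecewise

section Overlap

variable {ι : Type*} [Fintype ι] [DecidableEq ι] {α : ι → Type*} [∀ i, MeasurableSpace (α i)]
  (μ : ∀ i, Measure (α i)) (E : Set (∀ i, α i))

noncomputable def sectionProb (s : Finset ι) (v : ∀ i, α i) : ℝ≥0∞ :=
  Measure.pi μ {x | s.piecewise v x ∈ E}

noncomputable def overlapProb (s : Finset ι) : ℝ≥0∞ :=
  (Measure.pi μ).prod (Measure.pi μ) {p | p.1 ∈ E ∧ s.piecewise p.1 p.2 ∈ E}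

variable {μ E}

theorem sectionProb_piecewise (s : Finset ι) (v x : ∀ i, α i) :
    sectionProb μ E s (s.piecewise v x) = sectionProb μ E s v := by
  simp only [sectionProb, Finset.piecewise_idem_left]

theorem measurable_sectionProb [∀ i, SigmaFinite (μ i)] (hE : MeasurableSet E) (s : Finset ι) :
    Measurable (sectionProb μ E s) :=
  measurable_measure_prodMk_left (measurable_finset_piecewise s hE)

variable [∀ i, IsProbabilityMeasure (μ i)]

theorem lintegral_sectionProb_piecewise (hE : MeasurableSet E) {s t : Finset ι} (hst : s ⊆ t)
    (v : ∀ i, α i) :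
    ∫⁻ x, sectionProb μ E t (s.piecewise v x) ∂Measure.pi μ = sectionProb μ E s v := by
  have hswap : ∀ x y : ∀ i, α i,
      t.piecewise (s.piecewise v x) y = s.piecewise v (t.piecewise x y) := by
    intro x y; ext i
    by_cases his : i ∈ s
    · simp [his, hst his]
    · by_cases hit : i ∈ t <;> simp [his, hit]
  have hE' := measurableSet_piecewise_mem hE s v
  rw [sectionProb, ← (measurePreserving_finset_piecewise μ t).measure_preimage
    hE'.nullMeasurableSet, Measure.prod_apply (measurable_finset_piecewise t hE')]
  simp only [sectionProb, Set.preimage, Set.mem_ofPred_eq, hswap]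

theorem overlapProb_eq_lintegral_sq (hE : MeasurableSet E) (s : Finset ι) :
    overlapProb μ E s = ∫⁻ v, sectionProb μ E s v ^ 2 ∂Measure.pi μ := by
  have hpair :
      MeasurableSet {p : (∀ i, α i) × (∀ i, α i) | p.1 ∈ E ∧ s.piecewise p.1 p.2 ∈ E} :=
    (measurable_fst hE).inter (measurable_finset_piecewise s hE)
  have hslice : ∀ x, Measure.pi μ (Prod.mk x ⁻¹'
      {p : (∀ i, α i) × (∀ i, α i) | p.1 ∈ E ∧ s.piecewise p.1 p.2 ∈ E})
        = E.indicator (sectionProb μ E s) x := by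
    intro x
    by_cases hx : x ∈ E <;> simp [hx, sectionProb]
  have hsection : ∀ v x, E.indicator (sectionProb μ E s) (s.piecewise v x)
      = {x | s.piecewise v x ∈ E}.indicator (fun _ => sectionProb μ E s v) x := by
    intro v x
    by_cases hx : s.piecewise v x ∈ E <;> simp [hx, sectionProb_piecewise]
  rw [overlapProb, Measure.prod_apply hpair]
  simp only [hslice]
  rw [lintegral_eq_lintegral_lintegral_piecewise μ s ((measurable_sectionProb hE s).indicator hE)]
  refine lintegral_congr fun v => ?_
  simp only [hsection]
  rw [lintegral_indicator_const (measurableSet_piecewise_mem hE s v), sq]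
  rfl

theorem overlapProb_mono (hE : MeasurableSet E) {s t : Finset ι} (hst : s ⊆ t) :
    overlapProb μ E s ≤ overlapProb μ E t := by
  have hF := measurable_sectionProb (μ := μ) hE t
  calc overlapProb μ E s = ∫⁻ v, sectionProb μ E s v ^ 2 ∂Measure.pi μ :=
        overlapProb_eq_lintegral_sq hE s
    _ = ∫⁻ v, (∫⁻ x, sectionProb μ E t (s.piecewise v x) ∂Measure.pi μ) ^ 2 ∂Measure.pi μ := by
        simp_rw [lintegral_sectionProb_piecewise hE hst]
    _ ≤ ∫⁻ v, ∫⁻ x, sectionProb μ E t (s.piecewise v x) ^ 2 ∂Measure.pi μ ∂Measure.pi μ := by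
        refine lintegral_mono fun v => sq_lintegral_le_lintegral_sq _ ?_
        exact (hF.comp ((measurable_finset_piecewise s).comp measurable_prodMk_left)).aemeasurable
    _ = ∫⁻ w, sectionProb μ E t w ^ 2 ∂Measure.pi μ :=
        (lintegral_eq_lintegral_lintegral_piecewise μ s (hF.pow_const 2)).symm
    _ = overlapProb μ E t := (overlapProb_eq_lintegral_sq hE t).symm

theorem overlapProb_univ : overlapProb μ E Finset.univ = Measure.pi μ E := by
  have : {p : (∀ i, α i) × (∀ i, α i) | p.1 ∈ E ∧ Finset.univ.piecewise p.1 p.2 ∈ E}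
      = E ×ˢ Set.univ := by
    ext p; simp
  rw [overlapProb, this, Measure.prod_prod, measure_univ, mul_one]

theorem overlapProb_empty : overlapProb μ E ∅ = Measure.pi μ E ^ 2 := by
  have : {p : (∀ i, α i) × (∀ i, α i) | p.1 ∈ E ∧ (∅ : Finset ι).piecewise p.1 p.2 ∈ E}
      = E ×ˢ E := by
    ext p; simp
  rw [overlapProb, this, Measure.prod_prod, sq]

end Overlap

theorem ProbabilityTheory.iIndepFun.map_blocks_eq_prod {ι κ : Type*} [Fintype ι] [Fintype κ]
    {P : Measure Ω} {ξ : ℕ → Ω → S} (hindep : iIndepFun ξ P) (hmeas : ∀ i, Measurable (ξ i))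
    (hident : ∀ i j, P.map (ξ i) = P.map (ξ j)) {a : ι → ℕ} {b : κ → ℕ}
    (hab : (Sum.elim a b).Injective) :
    P.map (fun ω => (fun i => ξ (a i) ω, fun j => ξ (b j) ω))
      = (Measure.pi fun _ => P.map (ξ 0)).prod (Measure.pi fun _ => P.map (ξ 0)) := by
  have := hindep.isProbabilityMeasure
  have hlaw : P.map (fun ω (l : ι ⊕ κ) => ξ (Sum.elim a b l) ω)
      = Measure.pi fun _ => P.map (ξ 0) := by
    rw [(hindep.precomp hab).map_fun_eq_pi_map fun l => (hmeas _).aemeasurable]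
    simp only [hident _ 0]
  have hsplit := measurePreserving_sumPiEquivProdPi (X := fun _ : ι ⊕ κ => S)
    (fun _ => P.map (ξ 0))
  rw [← hsplit.map_eq, ← hlaw, Measure.map_map hsplit.measurable
    (measurable_pi_lambda _ fun l => hmeas _)]
  rfl

def lastCoords (k r : ℕ) : Finset (Fin k) :=
  Finset.univ.filter fun i => k - r ≤ i

theorem lastCoords_zero (k : ℕ) : lastCoords k 0 = ∅ := by
  ext i; simp [lastCoords]

theorem lastCoords_self (k : ℕ) : lastCoords k k = Finset.univ := by
  ext i; simp [lastCoords]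

theorem lastCoords_mono (k : ℕ) : Monotone (lastCoords k) := by
  intro r r' hr i
  simp only [lastCoords, Finset.mem_filter, Finset.mem_univ, true_and]
  omega

/-- Rotating the window `x (k - r), …, x (2k - r - 1)` by `r` moves the `r` entries it shares
with `x 0, …, x (k - 1)` to the last `r` positions and the fresh entries `x k, …` to the first
`k - r`. -/
theorem comp_rotate_eq_piecewise {β : Type*} {k r : ℕ} [NeZero k] (hr : r ≤ k) (x : ℕ → β) :
    (fun j : Fin k => x (k - r + j)) ∘ Equiv.addRight (Fin.ofNat k r)
      = (lastCoords k r).piecewise (fun i => x i) (fun i => x (k + i)) := by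
  funext i
  have hi := i.isLt
  simp only [Function.comp_apply, Equiv.coe_addRight, Fin.val_add, Fin.val_ofNat,
    Nat.add_mod_mod, Finset.piecewise, lastCoords, Finset.mem_filter, Finset.mem_univ, true_and]
  split_ifs with h
  · rw [Nat.mod_eq_sub_mod (by omega), Nat.mod_eq_of_lt (by omega)]
    congr 1; omega
  · rw [Nat.mod_eq_of_lt (by omega)]
    congr 1; omega

theorem measure_mem_and_shift_mem_eq_overlapProb {P : Measure Ω} {ξ : ℕ → Ω → S}
    (hmeas : ∀ i, Measurable (ξ i)) (hindep : iIndepFun ξ P)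
    (hident : ∀ i j, P.map (ξ i) = P.map (ξ j)) {k r : ℕ} [NeZero k] (hr : r ≤ k)
    {E : Set (Fin k → S)} (hE : MeasurableSet E)
    (hEsymm : ∀ (σ : Equiv.Perm (Fin k)) (x : Fin k → S), x ∘ σ ∈ E ↔ x ∈ E) :
    P {ω | (fun j : Fin k => ξ j ω) ∈ E ∧ (fun j : Fin k => ξ (k - r + j) ω) ∈ E}
      = overlapProb (fun _ => P.map (ξ 0)) E (lastCoords k r) := by
  classical
  have hblocks : (Sum.elim (fun i : Fin k => (i : ℕ)) (fun i : Fin k => k + i)).Injective :=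
    Fin.val_injective.sumElim (fun a b h => Fin.ext (Nat.add_left_cancel h))
      fun a b => (a.isLt.trans_le (Nat.le_add_right k b)).ne
  have hpair : Measurable fun ω => (fun i : Fin k => ξ i ω, fun i : Fin k => ξ (k + i) ω) :=
    (measurable_pi_lambda _ fun i => hmeas _).prodMk (measurable_pi_lambda _ fun i => hmeas _)
  have hset : {ω | (fun j : Fin k => ξ j ω) ∈ E ∧ (fun j : Fin k => ξ (k - r + j) ω) ∈ E}
      = (fun ω => (fun i : Fin k => ξ i ω, fun i : Fin k => ξ (k + i) ω)) ⁻¹'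
          {p | p.1 ∈ E ∧ (lastCoords k r).piecewise p.1 p.2 ∈ E} := by
    ext ω
    simp only [Set.mem_ofPred_eq, Set.mem_preimage, ← comp_rotate_eq_piecewise hr fun n => ξ n ω,
      hEsymm]
  have hT : MeasurableSet {p : (Fin k → S) × (Fin k → S) |
      p.1 ∈ E ∧ (lastCoords k r).piecewise p.1 p.2 ∈ E} :=
    (measurable_fst hE).inter (measurable_finset_piecewise _ hE)
  rw [hset, ← Measure.map_apply hpair hT, hindep.map_blocks_eq_prod hmeas hident hblocks]
  rfl

theorem stmt_19 [IsProbabilityMeasure (ℙ : Measure Ω)]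
    (k : ℕ) (hk : 0 < k) (ξ : ℕ → Ω → S)
    (hmeas : ∀ i, Measurable (ξ i))
    (hindep : iIndepFun ξ ℙ)
    (hident : ∀ i j, Measure.map (ξ i) ℙ = Measure.map (ξ j) ℙ)
    (h : (Fin k → S) → ℝ) (hmeas_h : Measurable h)
    (hsymm : ∀ (σ : Equiv.Perm (Fin k)) (x : Fin k → S), h (x ∘ σ) = h x)
    (z : ℝ) (hp : 0 < pnz k ξ h z) :
    pnz k ξ h z ≤ taunz k ξ h z 1 ∧
      (∀ r, 1 ≤ r → r < k → taunz k ξ h z r ≤ taunz k ξ h z (r + 1)) ∧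
      taunz k ξ h z k = 1 := by
  have : NeZero k := ⟨hk.ne'⟩
  set μ : Measure S := Measure.map (ξ 0) ℙ
  have : IsProbabilityMeasure μ := Measure.isProbabilityMeasure_map (hmeas 0).aemeasurable
  set E : Set (Fin k → S) := {v | z < h v}
  have hjoint : ∀ r ≤ k, ℙ {ω | z < h (fun j => ξ j ω) ∧ z < h (fun j => ξ (k - r + j) ω)}
      = overlapProb (fun _ => μ) E (lastCoords k r) := fun r hr =>
    measure_mem_and_shift_mem_eq_overlapProb hmeas hindep hident hr (hmeas_h measurableSet_Ioi)
      fun σ x => iff_of_eq (congrArg (z < ·) (hsymm σ x))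
  have hpE : pnz k ξ h z = (Measure.pi (fun _ => μ) E).toReal := by
    have hkk := hjoint k le_rfl
    simp only [Nat.sub_self, zero_add, and_self, lastCoords_self, overlapProb_univ] at hkk
    rw [pnz, hkk]
  have hτ : ∀ r ≤ k, taunz k ξ h z r =
      (Measure.pi (fun _ => μ) E).toReal⁻¹ * (overlapProb (fun _ => μ) E (lastCoords k r)).toReal :=
    fun r hr => by rw [taunz, hjoint r hr, hpE]
  have hmono : ∀ r < k, taunz k ξ h z r ≤ taunz k ξ h z (r + 1) := by
    intro r hr
    rw [hτ r hr.le, hτ (r + 1) hr]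
    gcongr
    · exact measure_ne_top _ _
    · exact overlapProb_mono (hmeas_h measurableSet_Ioi) (lastCoords_mono k r.le_succ)
  rw [hpE] at hp ⊢
  refine ⟨?_, fun r _ hr => hmono r hr, ?_⟩
  · calc (Measure.pi (fun _ => μ) E).toReal = taunz k ξ h z 0 := by
          rw [hτ 0 (Nat.zero_le k), lastCoords_zero, overlapProb_empty, ENNReal.toReal_pow]
          field_simp
      _ ≤ taunz k ξ h z 1 := hmono 0 hk
  · rw [hτ k le_rfl, lastCoords_self, overlapProb_univ]
    exact inv_mul_cancel₀ hp.ne'
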